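/- Consider a GWO stagnation process with horizon T ≥ 2, guiding positions p₁, p₂, p₃, center c = (p₁ + p₂ + p₃)/3, and step sizes a(t) = 2(1 - t/T), and assume that X(1) is integrable. Then for every natural number t with 2 ≤ t ≤ T, X(t) is integrable and E[X(t)] = c. In particular the sequence of expectations E[X(t)] is eventually constant, so its limit exists (order-1 stability). -/

import Mathlib

/-!
Each exploration coefficient `A_k(t)` is independent of the distance `|C_k(t) p_k - X(t)|`, built
from `X(t)` and `C_k(t)`, and has mean zero because its law is symmetric about the origin. Hence
every exploration term `A_k(t) |C_k(t) p_k - X(t)|` has expectation zero, and `E[X(t+1)]` is the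
centre `(p₁ + p₂ + p₃)/3` whatever the law of `X(t)`. Integrability propagates along the recursion
because `A_k(t)` and `C_k(t)` are bounded.
-/

open MeasureTheory ProbabilityTheory Set

/-- The GWO step sizes `a(t) = 2 (1 - t/T)`. -/
noncomputable def gwoStep (T t : ℕ) : ℝ := 2 * (1 - (t : ℝ) / (T : ℝ))

/-- A GWO stagnation process with horizon `T`, guiding positions
`p 0, p 1, p 2` and step sizes `a(t) = 2 (1 - t/T)`: random positions `X t`
and random coefficients `A t k ~ U[-a(t), a(t)]`, `C t k ~ U[0, 2]` such that
for each `t` the seven random variables `X t, A t k, C t k` are mutually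
independent and the GWO update equation holds pointwise. -/
structure GWOStagnationProcess {Ω : Type*} [MeasurableSpace Ω] (P : Measure Ω)
    (T : ℕ) (p : Fin 3 → ℝ) where
  X : ℕ → Ω → ℝ
  A : ℕ → Fin 3 → Ω → ℝ
  C : ℕ → Fin 3 → Ω → ℝ
  measX : ∀ t, Measurable (X t)
  measA : ∀ t k, Measurable (A t k)
  measC : ∀ t k, Measurable (C t k)
  lawA : ∀ t, 1 ≤ t → t ≤ T - 1 → ∀ k,
    Measure.map (A t k) P
      = (volume (Icc (-(gwoStep T t)) (gwoStep T t)))⁻¹ •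
          volume.restrict (Icc (-(gwoStep T t)) (gwoStep T t))
  lawC : ∀ t, 1 ≤ t → t ≤ T - 1 → ∀ k,
    Measure.map (C t k) P
      = (volume (Icc (0:ℝ) 2))⁻¹ • volume.restrict (Icc (0:ℝ) 2)
  indep : ∀ t, 1 ≤ t → t ≤ T - 1 →
    iIndepFun (m := fun _ : Fin 7 => (inferInstance : MeasurableSpace ℝ))
      ![X t, A t 0, A t 1, A t 2, C t 0, C t 1, C t 2] P
  update : ∀ t, 1 ≤ t → t ≤ T - 1 → ∀ ω,
    X (t + 1) ω
      = (1/3 : ℝ) * ∑ k : Fin 3, (p k + A t k ω * |C t k ω * p k - X t ω|)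

theorem setIntegral_Icc_neg_id (a : ℝ) : ∫ x in Icc (-a) a, x = 0 := by
  rcases le_or_gt 0 a with ha | ha
  · rw [integral_Icc_eq_integral_Ioc, ← intervalIntegral.integral_of_le (by linarith),
      integral_id]
    ring
  · rw [Icc_eq_empty (by linarith), Measure.restrict_empty, integral_zero_measure]

namespace MeasureTheory.pdf.IsUniform

variable {E Ω : Type*} [MeasurableSpace E] [MeasurableSpace Ω] {μ : Measure E} {P : Measure Ω}

theorem ae_mem {X : Ω → E} {s : Set E} (hX : AEMeasurable X P) (hs : MeasurableSet s)
    (hu : IsUniform X s P μ) : ∀ᵐ ω ∂P, X ω ∈ s :=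
  ae_of_ae_map hX (hu ▸ ae_cond_mem hs)

theorem integral_eq_zero_of_Icc_neg {X : Ω → ℝ} {a : ℝ} (hu : IsUniform X (Icc (-a) a) P) :
    ∫ ω, X ω ∂P = 0 := by
  rw [hu.integral_eq, setIntegral_Icc_neg_id, mul_zero]

end MeasureTheory.pdf.IsUniform

namespace GWOStagnationProcess

variable {Ω : Type*} [MeasurableSpace Ω] {P : Measure Ω} {T : ℕ} {p : Fin 3 → ℝ}
  (proc : GWOStagnationProcess P T p) {t : ℕ}

theorem ae_abs_A_le (ht : 1 ≤ t) (htT : t ≤ T - 1) (k : Fin 3) :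
    ∀ᵐ ω ∂P, |proc.A t k ω| ≤ gwoStep T t := by
  have hu : pdf.IsUniform (proc.A t k) (Icc (-gwoStep T t) (gwoStep T t)) P :=
    proc.lawA t ht htT k
  filter_upwards [hu.ae_mem (proc.measA t k).aemeasurable measurableSet_Icc] with ω hω
  exact abs_le.mpr hω

theorem ae_abs_C_le (ht : 1 ≤ t) (htT : t ≤ T - 1) (k : Fin 3) :
    ∀ᵐ ω ∂P, |proc.C t k ω| ≤ 2 := by
  have hu : pdf.IsUniform (proc.C t k) (Icc 0 2) P := proc.lawC t ht htT k
  filter_upwards [hu.ae_mem (proc.measC t k).aemeasurable measurableSet_Icc] with ω hω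
  exact abs_le.mpr ⟨by linarith [hω.1], hω.2⟩

theorem integral_A (ht : 1 ≤ t) (htT : t ≤ T - 1) (k : Fin 3) :
    ∫ ω, proc.A t k ω ∂P = 0 :=
  pdf.IsUniform.integral_eq_zero_of_Icc_neg (proc.lawA t ht htT k)

theorem indepFun_C_X_A (ht : 1 ≤ t) (htT : t ≤ T - 1) (k : Fin 3) :
    IndepFun (fun ω => (proc.C t k ω, proc.X t ω)) (proc.A t k) P := by
  have hmeas : ∀ i, Measurable
      (![proc.X t, proc.A t 0, proc.A t 1, proc.A t 2, proc.C t 0, proc.C t 1, proc.C t 2] i) := by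
    intro i
    fin_cases i
    exacts [proc.measX t, proc.measA t 0, proc.measA t 1, proc.measA t 2,
      proc.measC t 0, proc.measC t 1, proc.measC t 2]
  have h := proc.indep t ht htT
  fin_cases k
  exacts [h.indepFun_prodMk hmeas 4 0 1 (by decide) (by decide),
    h.indepFun_prodMk hmeas 5 0 2 (by decide) (by decide),
    h.indepFun_prodMk hmeas 6 0 3 (by decide) (by decide)]

theorem integrable_A_mul_dist [IsFiniteMeasure P] (ht : 1 ≤ t) (htT : t ≤ T - 1) (k : Fin 3)
    (hX : Integrable (proc.X t) P) :
    Integrable (fun ω => proc.A t k ω * |proc.C t k ω * p k - proc.X t ω|) P := by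
  have hC : Integrable (proc.C t k) P :=
    .of_bound (proc.measC t k).aestronglyMeasurable 2 (proc.ae_abs_C_le ht htT k)
  exact ((hC.mul_const (p k)).sub hX).abs.bdd_mul (proc.measA t k).aestronglyMeasurable
    (proc.ae_abs_A_le ht htT k)

theorem integral_A_mul_dist (ht : 1 ≤ t) (htT : t ≤ T - 1) (k : Fin 3) :
    ∫ ω, proc.A t k ω * |proc.C t k ω * p k - proc.X t ω| ∂P = 0 := by
  have hdist : Measurable fun q : ℝ × ℝ => |q.1 * p k - q.2| :=
    ((measurable_fst.mul_const (p k)).sub measurable_snd).abs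
  have hindep := ((proc.indepFun_C_X_A ht htT k).comp hdist measurable_id).symm
  calc ∫ ω, proc.A t k ω * |proc.C t k ω * p k - proc.X t ω| ∂P
      = (∫ ω, proc.A t k ω ∂P) * ∫ ω, |proc.C t k ω * p k - proc.X t ω| ∂P :=
        hindep.integral_mul_eq_mul_integral (proc.measA t k).aestronglyMeasurable
          (hdist.comp ((proc.measC t k).prodMk (proc.measX t))).aestronglyMeasurable
    _ = 0 := by rw [proc.integral_A ht htT k, zero_mul]

theorem integrable_const_add_A_mul_dist [IsFiniteMeasure P] (ht : 1 ≤ t) (htT : t ≤ T - 1)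
    (k : Fin 3) (hX : Integrable (proc.X t) P) :
    Integrable (fun ω => p k + proc.A t k ω * |proc.C t k ω * p k - proc.X t ω|) P :=
  (integrable_const (p k)).add (proc.integrable_A_mul_dist ht htT k hX)

theorem integrable_X_succ [IsFiniteMeasure P] (ht : 1 ≤ t) (htT : t ≤ T - 1)
    (hX : Integrable (proc.X t) P) : Integrable (proc.X (t + 1)) P := by
  rw [funext (proc.update t ht htT)]
  exact (integrable_finsetSum _ fun k _ =>
    proc.integrable_const_add_A_mul_dist ht htT k hX).const_mul _

theorem integral_X_succ [IsProbabilityMeasure P] (ht : 1 ≤ t) (htT : t ≤ T - 1)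
    (hX : Integrable (proc.X t) P) : ∫ ω, proc.X (t + 1) ω ∂P = (p 0 + p 1 + p 2) / 3 := by
  have hterm (k : Fin 3) :
      ∫ ω, p k + proc.A t k ω * |proc.C t k ω * p k - proc.X t ω| ∂P = p k := by
    rw [integral_add (integrable_const _) (proc.integrable_A_mul_dist ht htT k hX),
      proc.integral_A_mul_dist ht htT k, integral_const, probReal_univ, one_smul, add_zero]
  rw [funext (proc.update t ht htT), integral_const_mul,
    integral_finsetSum _ fun k _ => proc.integrable_const_add_A_mul_dist ht htT k hX]
  simp only [hterm, Fin.sum_univ_three]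
  ring

theorem integrable_X [IsFiniteMeasure P] (hX : Integrable (proc.X 1) P) (ht : 1 ≤ t)
    (htT : t ≤ T) : Integrable (proc.X t) P := by
  induction t, ht using Nat.le_induction with
  | base => exact hX
  | succ s hs ih => exact proc.integrable_X_succ hs (by omega) (ih (by omega))

end GWOStagnationProcess

theorem gwo_order_one_stability_general
    {Ω : Type*} [MeasurableSpace Ω] (P : Measure Ω) [IsProbabilityMeasure P]
    (T : ℕ) (p : Fin 3 → ℝ)
    (proc : GWOStagnationProcess P T p)
    (c : ℝ) (hc : c = (p 0 + p 1 + p 2) / 3)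
    (hinit : Integrable (proc.X 1) P) :
    ∀ t : ℕ, 2 ≤ t → t ≤ T →
      Integrable (proc.X t) P ∧ ∫ ω, proc.X t ω ∂P = c := by
  intro t ht htT
  obtain ⟨s, rfl⟩ : ∃ s, t = s + 1 := ⟨t - 1, by omega⟩
  have hXs := proc.integrable_X hinit (t := s) (by omega) (by omega)
  exact ⟨proc.integrable_X_succ (by omega) (by omega) hXs,
    hc ▸ proc.integral_X_succ (by omega) (by omega) hXs⟩

/-- Proposition 3.4 of the paper (order-1 stability of the GWO under the
stagnation assumption): if the initial position is integrable, then at every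
iteration `2 ≤ t ≤ T` the position `X t` is integrable with expectation
exactly `c = (p 0 + p 1 + p 2) / 3`. -/
theorem gwo_order_one_stability
    {Ω : Type*} [MeasurableSpace Ω] (P : Measure Ω) [IsProbabilityMeasure P]
    (T : ℕ) (hT : 2 ≤ T) (p : Fin 3 → ℝ)
    (proc : GWOStagnationProcess P T p)
    (c : ℝ) (hc : c = (p 0 + p 1 + p 2) / 3)
    (hinit : Integrable (proc.X 1) P) :
    ∀ t : ℕ, 2 ≤ t → t ≤ T →
      Integrable (proc.X t) P ∧ ∫ ω, proc.X t ω ∂P = c :=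
  gwo_order_one_stability_general P T p proc c hc hinit
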